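/- arXiv:2008.03047 — 3 statements merged into one kernel-verified Lean document; each statement's English description precedes it below -/
import Mathlib

section
/- Let μ₀ be a symmetric positive definite 3×3 matrix, η⁰ symmetric positive definite 3×3, ν̲ > 0, and θ ∈ S². Define S(θ) = μ₀^{-1/2} r(θ)ᵗ (η⁰)⁻¹ r(θ) μ₀^{-1/2} + ν̲ · μ₀^{1/2} θθᵗ μ₀^{1/2} on ℂ³. Then S(θ) is reduced by the orthogonal decomposition ℂ³ = J⁰_θ ⊕ G⁰_θ, where G⁰_θ = span{μ₀^{1/2}θ} and J⁰_θ = {μ₀^{1/2}c : ⟨μ₀c, θ⟩ = 0}: S(θ) maps each subspace into itself. -/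
open Matrix

/-- The cross-product matrix `r(θ)`, satisfying `r(θ) v = θ × v`. -/
def crossMatrix (θ : Fin 3 → ℝ) : Matrix (Fin 3) (Fin 3) ℝ :=
  !![0, -θ 2, θ 1; θ 2, 0, -θ 0; -θ 1, θ 0, 0]

/-! Writing `u = μ₀^{1/2} θ` and `B = r(θ) μ₀^{-1/2}`, the germ is `S = Bᵀ (η⁰)⁻¹ B + ν u uᵀ`
with `B u = r(θ) θ = 0`. Hence `S` is symmetric and `u` is an eigenvector of it. A symmetric
matrix preserves the line through an eigenvector and its orthogonal complement for the bilinear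
form `⬝ᵥ`, and `J⁰_θ` is exactly that complement, since `⟨μ₀ c, θ⟩ = ⟨u, μ₀^{1/2} c⟩`. -/

namespace Matrix

variable {m n R : Type*} [CommRing R]

theorem IsSymm.mapsTo_dotProduct_eq_zero [Fintype n] {S : Matrix n n R} (hS : S.IsSymm)
    {u : n → R} {c : R} (hu : S *ᵥ u = c • u) :
    Set.MapsTo (S *ᵥ ·) {v | u ⬝ᵥ v = 0} {v | u ⬝ᵥ v = 0} := by
  intro v (hv : u ⬝ᵥ v = 0)
  change u ⬝ᵥ S *ᵥ v = 0
  rw [dotProduct_mulVec, ← mulVec_transpose, hS.eq, hu, smul_dotProduct, hv, smul_zero]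

theorem mapsTo_smul_of_mulVec_eq_smul [Fintype n] {S : Matrix n n R} {u : n → R} {c : R}
    (hu : S *ᵥ u = c • u) :
    Set.MapsTo (S *ᵥ ·) {v | ∃ a : R, v = a • u} {v | ∃ a : R, v = a • u} := by
  rintro _ ⟨a, rfl⟩
  exact ⟨a * c, show S *ᵥ (a • u) = _ by rw [mulVec_smul, hu, smul_smul]⟩

theorem isSymm_transpose_mul_mul_add_smul_vecMulVec [Fintype m] {Q : Matrix m m R}
    (hQ : Q.IsSymm) (B : Matrix m n R) (ν : R) (u : n → R) :
    (Bᵀ * Q * B + ν • vecMulVec u u).IsSymm := by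
  refine IsSymm.add ?_ (IsSymm.smul (transpose_vecMulVec u u) ν)
  rw [IsSymm, transpose_mul, transpose_mul, transpose_transpose, hQ.eq, Matrix.mul_assoc]

theorem transpose_mul_mul_add_smul_vecMulVec_mulVec [Fintype m] [Fintype n] (Q : Matrix m m R)
    {B : Matrix m n R} {u : n → R} (hB : B *ᵥ u = 0) (ν : R) :
    (Bᵀ * Q * B + ν • vecMulVec u u) *ᵥ u = (ν * (u ⬝ᵥ u)) • u := by
  rw [add_mulVec, ← mulVec_mulVec, hB, mulVec_zero, zero_add, smul_mulVec, vecMulVec_mulVec,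
    op_smul_eq_smul, smul_smul]

theorem IsSymm.setOf_mulVec_eq_and_mul_self_mulVec_dotProduct_eq_zero [Fintype n] [DecidableEq n]
    {s : Matrix n n R} (hsymm : s.IsSymm) (hs : IsUnit s.det) (t : n → R) :
    {v | ∃ c, v = s *ᵥ c ∧ ((s * s) *ᵥ c) ⬝ᵥ t = 0} = {v | (s *ᵥ t) ⬝ᵥ v = 0} := by
  have hdot (c : n → R) : ((s * s) *ᵥ c) ⬝ᵥ t = (s *ᵥ t) ⬝ᵥ (s *ᵥ c) := by
    rw [dotProduct_comm, ← mulVec_mulVec, dotProduct_mulVec, ← mulVec_transpose, hsymm.eq]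
  have hcancel (v : n → R) : s *ᵥ (s⁻¹ *ᵥ v) = v := by
    rw [mulVec_mulVec, mul_nonsing_inv s hs, one_mulVec]
  ext v
  constructor
  · rintro ⟨c, rfl, hc⟩
    change _ = 0
    rwa [← hdot]
  · intro hv
    exact ⟨s⁻¹ *ᵥ v, (hcancel v).symm, by rwa [hdot, hcancel]⟩

theorem isUnit_det_map [Fintype n] [DecidableEq n] {S : Type*} [CommRing S] (f : R →+* S)
    {A : Matrix n n R} (hA : IsUnit A.det) : IsUnit (A.map f).det :=
  f.map_det A ▸ hA.map f

end Matrix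

theorem crossMatrix_mulVec_self (θ : Fin 3 → ℝ) : crossMatrix θ *ᵥ θ = 0 := by
  funext i
  fin_cases i <;> simp [crossMatrix, mulVec, dotProduct, Fin.sum_univ_three] <;> ring

theorem map_ofReal_mulVec {m n : Type*} [Fintype n] (A : Matrix m n ℝ) (x : n → ℝ) :
    A.map Complex.ofReal *ᵥ (fun i => (x i : ℂ)) = fun i => ((A *ᵥ x) i : ℂ) :=
  funext fun i => (RingHom.map_mulVec Complex.ofRealHom A x i).symm

theorem germ_reduced_by_weyl_decomposition_general
    (μ₀ s η₀ : Matrix (Fin 3) (Fin 3) ℝ)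
    (hs : s.PosDef) (hssymm : s.IsSymm) (hsq : s * s = μ₀)
    (hη₀symm : η₀.IsSymm)
    (ν : ℝ)
    (θ : Fin 3 → ℝ) :
    let S : Matrix (Fin 3) (Fin 3) ℝ :=
      s⁻¹ * (crossMatrix θ)ᵀ * η₀⁻¹ * crossMatrix θ * s⁻¹
        + ν • (s * vecMulVec θ θ * s);
    let SC : Matrix (Fin 3) (Fin 3) ℂ := S.map Complex.ofReal;
    let J : Set (Fin 3 → ℂ) :=
      {v | ∃ c : Fin 3 → ℂ, v = (s.map Complex.ofReal) *ᵥ c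
        ∧ ((μ₀.map Complex.ofReal) *ᵥ c) ⬝ᵥ (fun i => (θ i : ℂ)) = 0};
    let G : Set (Fin 3 → ℂ) :=
      {v | ∃ a : ℂ, v = a • fun i => ((s *ᵥ θ) i : ℂ)};
    Set.MapsTo (fun v => SC *ᵥ v) J J ∧ Set.MapsTo (fun v => SC *ᵥ v) G G := by
  intro S SC J G
  have hsdet : IsUnit s.det := hs.det_pos.ne'.isUnit
  set u := s *ᵥ θ
  let B := crossMatrix θ * s⁻¹
  have hS : S = Bᵀ * η₀⁻¹ * B + ν • vecMulVec u u := by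
    simp only [S, B, u, transpose_mul, transpose_nonsing_inv, hssymm.eq, mul_vecMulVec,
      vecMulVec_mul, ← mulVec_transpose, mul_assoc]
  have hB : B *ᵥ u = 0 := by
    rw [mulVec_mulVec, nonsing_inv_mul_cancel_right (h := hsdet), crossMatrix_mulVec_self]
  have hSC : SC.IsSymm := (hS ▸ isSymm_transpose_mul_mul_add_smul_vecMulVec hη₀symm.inv B ν u).map _
  have hSCu : SC *ᵥ (fun i => (u i : ℂ)) = ((ν * (u ⬝ᵥ u) : ℝ) : ℂ) • fun i => (u i : ℂ) := by
    rw [map_ofReal_mulVec, hS, transpose_mul_mul_add_smul_vecMulVec_mulVec _ hB]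
    funext i
    simp
  have hJ : J = {v | (fun i => (u i : ℂ)) ⬝ᵥ v = 0} := by
    have hdet : IsUnit (s.map Complex.ofReal).det := isUnit_det_map Complex.ofRealHom hsdet
    have hmul : μ₀.map Complex.ofReal = s.map Complex.ofReal * s.map Complex.ofReal := by
      rw [← hsq]; exact Matrix.map_mul (f := Complex.ofRealHom)
    simp only [J, hmul]
    rw [(hssymm.map _).setOf_mulVec_eq_and_mul_self_mulVec_dotProduct_eq_zero hdet,
      map_ofReal_mulVec]
  rw [hJ]
  exact ⟨hSC.mapsTo_dotProduct_eq_zero hSCu, mapsTo_smul_of_mulVec_eq_smul hSCu⟩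

/-- the spectral germ
`S(θ) = μ₀^{-1/2} r(θ)ᵗ (η⁰)⁻¹ r(θ) μ₀^{-1/2} + ν̲ μ₀^{1/2} θθᵗ μ₀^{1/2}`
(acting ℂ-linearly on ℂ³) is reduced by the orthogonal decomposition
`ℂ³ = J⁰_θ ⊕ G⁰_θ`, where `G⁰_θ = span{μ₀^{1/2}θ}` and
`J⁰_θ = {μ₀^{1/2} c : ⟨μ₀ c, θ⟩ = 0}`: it maps each subspace into itself.
Here `s = μ₀^{1/2}` is the positive square root of `μ₀`. -/
theorem germ_reduced_by_weyl_decomposition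
    (μ₀ s η₀ : Matrix (Fin 3) (Fin 3) ℝ)
    (hμ₀ : μ₀.PosDef) (hμ₀symm : μ₀.IsSymm)
    (hs : s.PosDef) (hssymm : s.IsSymm) (hsq : s * s = μ₀)
    (hη₀ : η₀.PosDef) (hη₀symm : η₀.IsSymm)
    (ν : ℝ) (hν : 0 < ν)
    (θ : Fin 3 → ℝ) (hθ : ∑ i, θ i ^ 2 = 1) :
    let S : Matrix (Fin 3) (Fin 3) ℝ :=
      s⁻¹ * (crossMatrix θ)ᵀ * η₀⁻¹ * crossMatrix θ * s⁻¹
        + ν • (s * vecMulVec θ θ * s);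
    let SC : Matrix (Fin 3) (Fin 3) ℂ := S.map Complex.ofReal;
    let J : Set (Fin 3 → ℂ) :=
      {v | ∃ c : Fin 3 → ℂ, v = (s.map Complex.ofReal) *ᵥ c
        ∧ ((μ₀.map Complex.ofReal) *ᵥ c) ⬝ᵥ (fun i => (θ i : ℂ)) = 0};
    let G : Set (Fin 3 → ℂ) :=
      {v | ∃ a : ℂ, v = a • fun i => ((s *ᵥ θ) i : ℂ)};
    Set.MapsTo (fun v => SC *ᵥ v) J J ∧ Set.MapsTo (fun v => SC *ᵥ v) G G :=
  germ_reduced_by_weyl_decomposition_general μ₀ s η₀ hs hssymm hsq hη₀symm ν θ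
end

section
/- Let μ₀ be a symmetric positive definite real 3×3 matrix and θ₀ ∈ S². The matrix μ₀^{-1/2} r(θ₀) μ₀^{-1/2}, restricted to the 2-dimensional subspace J⁰_{θ₀} = {μ₀^{1/2}c : ⟨μ₀c, θ₀⟩ = 0}, has eigenvalues ± i ⟨μ₀θ₀, θ₀⟩^{1/2} / (det μ₀)^{1/2}. -/
open Matrix

/-!
Over `ℂ` write `σ` for `s`, so that `M = σ⁻¹ r(θ₀) σ⁻¹` and `J` is the orthogonal complement of
`σ θ₀` for the bilinear dot product. Since `γ • 1 - M = σ⁻¹ (γ μ₀ - r(θ₀)) σ⁻¹` and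
`det (γ μ₀ - r(θ₀)) = γ³ det μ₀ + γ ⟨μ₀ θ₀, θ₀⟩` for symmetric `μ₀`, the eigenvalues of `M` on `ℂ³`
are `0` and `± i c₀`. The range of `M` is orthogonal to `σ θ₀` because `θ₀ × w ⊥ θ₀`, so the
eigenvectors for `± i c₀` lie in `J`. The kernel of `M` is spanned by `σ θ₀`, which is not in `J`
since `⟨σ θ₀, σ θ₀⟩ = ⟨μ₀ θ₀, θ₀⟩ > 0`.
-/

lemma Matrix.map_nonsing_inv {K L : Type*} [Field K] [Field L] {n : Type*} [Fintype n]
    [DecidableEq n] (f : K →+* L) (A : Matrix n n K) : A⁻¹.map f = (A.map f)⁻¹ := by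
  by_cases hA : IsUnit A.det
  · refine (inv_eq_right_inv ?_).symm
    rw [← RingHom.mapMatrix_apply, ← RingHom.mapMatrix_apply, ← map_mul, mul_nonsing_inv A hA,
      map_one]
  · have hA' : ¬IsUnit (A.map f).det := by
      rwa [← RingHom.mapMatrix_apply, ← RingHom.map_det, isUnit_map_iff]
    rw [nonsing_inv_apply_not_isUnit A hA, nonsing_inv_apply_not_isUnit _ hA']
    exact Matrix.map_zero f (map_zero f)

lemma Matrix.mulVec_dotProduct_eq_dotProduct_transpose_mulVec {R n : Type*} [CommRing R]
    [Fintype n] (A : Matrix n n R) (x y : n → R) : (A *ᵥ x) ⬝ᵥ y = x ⬝ᵥ (Aᵀ *ᵥ y) := by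
  rw [dotProduct_mulVec, vecMul_transpose, dotProduct_comm]

lemma Matrix.exists_mulVec_eq_smul_iff_det_eq_zero {K n : Type*} [Field K] [Fintype n]
    [DecidableEq n] (A : Matrix n n K) (γ : K) :
    (∃ v ≠ 0, A *ᵥ v = γ • v) ↔ (γ • 1 - A).det = 0 := by
  rw [← exists_mulVec_eq_zero_iff]
  refine exists_congr fun v => and_congr_right fun _ => ?_
  rw [sub_mulVec, smul_mulVec, one_mulVec, sub_eq_zero, eq_comm]

section Symmetric

variable {K n : Type*} [Field K] [Fintype n] [DecidableEq n] {σ : Matrix n n K}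

lemma inv_mulVec_dotProduct_mulVec (hσ : σ.IsSymm) (hdet : IsUnit σ.det) (w u : n → K) :
    (σ⁻¹ *ᵥ w) ⬝ᵥ (σ *ᵥ u) = w ⬝ᵥ u := by
  rw [mulVec_dotProduct_eq_dotProduct_transpose_mulVec, transpose_nonsing_inv, hσ.eq,
    mulVec_mulVec, nonsing_inv_mul _ hdet, one_mulVec]

lemma exists_eq_mulVec_and_mul_self_mulVec_dotProduct_eq_zero_iff (hσ : σ.IsSymm)
    (hdet : IsUnit σ.det) (θ v : n → K) :
    (∃ c, v = σ *ᵥ c ∧ ((σ * σ) *ᵥ c) ⬝ᵥ θ = 0) ↔ v ⬝ᵥ (σ *ᵥ θ) = 0 := by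
  constructor
  · rintro ⟨c, rfl, hc⟩
    rwa [← mulVec_mulVec, mulVec_dotProduct_eq_dotProduct_transpose_mulVec, hσ.eq] at hc
  · intro h
    refine ⟨σ⁻¹ *ᵥ v, by rw [mulVec_mulVec, mul_nonsing_inv _ hdet, one_mulVec], ?_⟩
    rwa [mulVec_mulVec, mul_assoc, mul_nonsing_inv _ hdet, mul_one,
      mulVec_dotProduct_eq_dotProduct_transpose_mulVec, hσ.eq]

end Symmetric

section CrossProduct

variable {R : Type*} [CommRing R]

lemma crossMatrix_map (f : ℝ →+* R) (θ : Fin 3 → ℝ) :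
    (crossMatrix θ).map f = LinearMap.toMatrix' (crossProduct (fun i => f (θ i))) := by
  ext i j
  fin_cases i <;> fin_cases j <;> simp [crossMatrix, LinearMap.toMatrix'_apply, cross_apply]

lemma eq_dotProduct_smul_of_cross_eq_zero {θ w : Fin 3 → R} (hθ : θ ⬝ᵥ θ = 1)
    (h : θ ⨯₃ w = 0) : w = (θ ⬝ᵥ w) • θ := by
  have := cross_cross_eq_smul_sub_smul' θ θ w
  rwa [h, map_zero, hθ, one_smul, eq_comm, sub_eq_zero, eq_comm] at this

lemma det_smul_sub_toMatrix'_cross (m : Matrix (Fin 3) (Fin 3) R) (hm : m.IsSymm)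
    (θ : Fin 3 → R) (γ : R) :
    (γ • m - LinearMap.toMatrix' (crossProduct θ)).det
      = γ ^ 3 * m.det + γ * ((m *ᵥ θ) ⬝ᵥ θ) := by
  have h01 : m 1 0 = m 0 1 := hm.apply 0 1
  have h02 : m 2 0 = m 0 2 := hm.apply 0 2
  have h12 : m 2 1 = m 1 2 := hm.apply 1 2
  simp [det_fin_three, LinearMap.toMatrix'_apply, cross_apply, mulVec, dotProduct,
    Fin.sum_univ_three, h01, h02, h12]
  ring

end CrossProduct

section Solenoidal

variable {K : Type*} [Field K]

/-- The paper's `μ₀^{-1/2} r(θ) μ₀^{-1/2}`, with `σ` in the role of `μ₀^{1/2}`. -/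
noncomputable def crossMatrixConj (σ : Matrix (Fin 3) (Fin 3) K) (θ : Fin 3 → K) :
    Matrix (Fin 3) (Fin 3) K :=
  σ⁻¹ * LinearMap.toMatrix' (crossProduct θ) * σ⁻¹

variable {σ : Matrix (Fin 3) (Fin 3) K} {θ : Fin 3 → K}

lemma crossMatrixConj_mulVec_dotProduct (hσ : σ.IsSymm) (hdet : IsUnit σ.det)
    (v : Fin 3 → K) : (crossMatrixConj σ θ *ᵥ v) ⬝ᵥ (σ *ᵥ θ) = 0 := by
  rw [crossMatrixConj, mul_assoc, ← mulVec_mulVec, inv_mulVec_dotProduct_mulVec hσ hdet,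
    ← mulVec_mulVec, LinearMap.toMatrix'_mulVec, dotProduct_comm, dot_self_cross]

lemma eq_zero_of_crossMatrixConj_mulVec_eq_zero (hσ : σ.IsSymm) (hdet : IsUnit σ.det)
    (hθ : θ ⬝ᵥ θ = 1) (hq : ((σ * σ) *ᵥ θ) ⬝ᵥ θ ≠ 0) {v : Fin 3 → K}
    (hv : v ⬝ᵥ (σ *ᵥ θ) = 0) (h : crossMatrixConj σ θ *ᵥ v = 0) : v = 0 := by
  set w := σ⁻¹ *ᵥ v
  have hvw : v = σ *ᵥ w := by rw [mulVec_mulVec, mul_nonsing_inv _ hdet, one_mulVec]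
  have hw : θ ⨯₃ w = 0 := by
    rw [crossMatrixConj, ← mulVec_mulVec, ← mulVec_mulVec, LinearMap.toMatrix'_mulVec] at h
    rw [← one_mulVec (θ ⨯₃ w), ← mul_nonsing_inv _ hdet, ← mulVec_mulVec, h, mulVec_zero]
  have hv' : v = (θ ⬝ᵥ w) • (σ *ᵥ θ) := by
    rw [← mulVec_smul, ← eq_dotProduct_smul_of_cross_eq_zero hθ hw, hvw]
  have hσθ : (σ *ᵥ θ) ⬝ᵥ (σ *ᵥ θ) = ((σ * σ) *ᵥ θ) ⬝ᵥ θ := by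
    rw [mulVec_dotProduct_eq_dotProduct_transpose_mulVec, hσ.eq, mulVec_mulVec, dotProduct_comm]
  rw [hv', smul_dotProduct, hσθ, smul_eq_mul, mul_eq_zero, or_iff_left hq] at hv
  rw [hv', hv, zero_smul]

lemma det_smul_one_sub_crossMatrixConj (hσ : σ.IsSymm) (hdet : IsUnit σ.det) (γ : K) :
    (γ • 1 - crossMatrixConj σ θ).det * σ.det ^ 2
      = γ ^ 3 * σ.det ^ 2 + γ * (((σ * σ) *ᵥ θ) ⬝ᵥ θ) := by
  have hconj : γ • 1 - crossMatrixConj σ θ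
      = σ⁻¹ * (γ • (σ * σ) - LinearMap.toMatrix' (crossProduct θ)) * σ⁻¹ := by
    rw [mul_sub, sub_mul, Matrix.mul_smul, Matrix.smul_mul, ← mul_assoc,
      nonsing_inv_mul _ hdet, one_mul, mul_nonsing_inv _ hdet, crossMatrixConj]
  have hσσ : (σ * σ).IsSymm := by rw [IsSymm, transpose_mul, hσ.eq]
  rw [hconj, det_mul, det_mul, det_smul_sub_toMatrix'_cross _ hσσ, det_nonsing_inv,
    Ring.inverse_eq_inv', det_mul]
  field_simp [hdet.ne_zero]

theorem exists_eigenvector_crossMatrixConj_iff (hσ : σ.IsSymm) (hdet : IsUnit σ.det)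
    (hθ : θ ⬝ᵥ θ = 1) (hq : ((σ * σ) *ᵥ θ) ⬝ᵥ θ ≠ 0) (γ : K) :
    (∃ v, v ⬝ᵥ (σ *ᵥ θ) = 0 ∧ v ≠ 0 ∧ crossMatrixConj σ θ *ᵥ v = γ • v)
      ↔ γ ^ 2 * σ.det ^ 2 + ((σ * σ) *ᵥ θ) ⬝ᵥ θ = 0 := by
  have hchar : (∃ v ≠ 0, crossMatrixConj σ θ *ᵥ v = γ • v)
      ↔ γ * (γ ^ 2 * σ.det ^ 2 + ((σ * σ) *ᵥ θ) ⬝ᵥ θ) = 0 := by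
    rw [exists_mulVec_eq_smul_iff_det_eq_zero, ← mul_left_inj' (pow_ne_zero 2 hdet.ne_zero),
      det_smul_one_sub_crossMatrixConj hσ hdet, zero_mul]
    ring_nf
  constructor
  · rintro ⟨v, hv, hv0, hγv⟩
    have hγ : γ ≠ 0 := by
      rintro rfl
      exact hv0 (eq_zero_of_crossMatrixConj_mulVec_eq_zero hσ hdet hθ hq hv (by
        rw [hγv, zero_smul]))
    exact (mul_eq_zero.1 (hchar.1 ⟨v, hv0, hγv⟩)).resolve_left hγ
  · intro h
    have hγ : γ ≠ 0 := by
      rintro rfl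
      exact hq (by simpa using h)
    obtain ⟨v, hv0, hγv⟩ := hchar.2 (by rw [h, mul_zero])
    refine ⟨v, ?_, hv0, hγv⟩
    have := crossMatrixConj_mulVec_dotProduct hσ hdet v (θ := θ)
    rw [hγv, smul_dotProduct, smul_eq_mul] at this
    exact (mul_eq_zero.1 this).resolve_left hγ

end Solenoidal

lemma map_conj_crossMatrix {K : Type*} [Field K] (f : ℝ →+* K) (s : Matrix (Fin 3) (Fin 3) ℝ)
    (θ : Fin 3 → ℝ) :
    (s⁻¹ * crossMatrix θ * s⁻¹).map f = crossMatrixConj (s.map f) (fun i => f (θ i)) := by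
  rw [crossMatrixConj, ← crossMatrix_map, ← map_nonsing_inv, ← RingHom.mapMatrix_apply,
    map_mul, map_mul]
  rfl

lemma sq_mul_add_eq_zero_iff {d q : ℝ} (hd : 0 < d) (hq : 0 ≤ q) (γ : ℂ) :
    γ ^ 2 * d + q = 0 ↔
      γ = Complex.I * (√q / √d : ℝ) ∨ γ = -Complex.I * (√q / √d : ℝ) := by
  set c := √q / √d
  have hc : c ^ 2 * d = q := by
    rw [div_pow, Real.sq_sqrt hq, Real.sq_sqrt hd.le]
    field_simp
  have hfactor : γ ^ 2 * d + q = d * ((γ - Complex.I * c) * (γ - -Complex.I * c)) := by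
    rw [← hc]
    push_cast
    linear_combination (d : ℂ) * c ^ 2 * Complex.I_sq
  rw [hfactor, mul_eq_zero, mul_eq_zero, sub_eq_zero, sub_eq_zero, or_iff_right]
  exact_mod_cast hd.ne'

theorem eigenvalues_on_solenoidal_subspace_general
    (μ₀ s : Matrix (Fin 3) (Fin 3) ℝ)
    (hμ₀ : μ₀.PosDef)
    (hssymm : s.IsSymm) (hsq : s * s = μ₀)
    (θ₀ : Fin 3 → ℝ) (hθ₀ : ∑ i, θ₀ i ^ 2 = 1) :
    let M : Matrix (Fin 3) (Fin 3) ℂ :=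
      (s⁻¹ * crossMatrix θ₀ * s⁻¹).map Complex.ofReal;
    let J : Set (Fin 3 → ℂ) :=
      {v | ∃ c : Fin 3 → ℂ, v = (s.map Complex.ofReal) *ᵥ c
        ∧ ((μ₀.map Complex.ofReal) *ᵥ c) ⬝ᵥ (fun i => (θ₀ i : ℂ)) = 0};
    let c₀ : ℝ := Real.sqrt ((μ₀ *ᵥ θ₀) ⬝ᵥ θ₀) / Real.sqrt μ₀.det;
    (∃ v ∈ J, v ≠ 0 ∧ M *ᵥ v = (Complex.I * c₀) • v)
      ∧ (∃ v ∈ J, v ≠ 0 ∧ M *ᵥ v = (-Complex.I * c₀) • v)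
      ∧ ∀ (γ : ℂ) (v : Fin 3 → ℂ), v ∈ J → v ≠ 0 → M *ᵥ v = γ • v →
          γ = Complex.I * c₀ ∨ γ = -Complex.I * c₀ := by
  intro M J c₀
  set σ := s.map Complex.ofReal
  set θ : Fin 3 → ℂ := fun i => (θ₀ i : ℂ)
  have hq : 0 < (μ₀ *ᵥ θ₀) ⬝ᵥ θ₀ := by
    simpa [dotProduct_comm] using
      hμ₀.dotProduct_mulVec_pos (x := θ₀) (by rintro rfl; simp at hθ₀)
  have hσσ : σ * σ = μ₀.map Complex.ofReal :=
    hsq ▸ (map_mul Complex.ofRealHom.mapMatrix s s).symm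
  have hdetσ : σ.det ^ 2 = μ₀.det := by
    rw [sq, ← det_mul, hσσ]
    exact (RingHom.map_det Complex.ofRealHom μ₀).symm
  have hdet : IsUnit σ.det := (isUnit_pow_iff two_ne_zero).1 <| by
    rw [hdetσ, isUnit_iff_ne_zero]
    exact_mod_cast hμ₀.det_pos.ne'
  have hσ : σ.IsSymm := by rw [IsSymm, ← transpose_map, hssymm.eq]
  have hθ : θ ⬝ᵥ θ = 1 := by
    simpa [θ, dotProduct, sq] using congrArg Complex.ofReal hθ₀
  have hqθ : ((σ * σ) *ᵥ θ) ⬝ᵥ θ = ((μ₀ *ᵥ θ₀) ⬝ᵥ θ₀ : ℝ) := by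
    rw [hσσ]
    simp [θ, dotProduct, mulVec]
  have hM : M = crossMatrixConj σ θ := map_conj_crossMatrix Complex.ofRealHom s θ₀
  have hspec : ∀ γ, (∃ v ∈ J, v ≠ 0 ∧ M *ᵥ v = γ • v) ↔
      γ = Complex.I * c₀ ∨ γ = -Complex.I * c₀ := by
    intro γ
    rw [← sq_mul_add_eq_zero_iff hμ₀.det_pos hq.le, ← hdetσ, ← hqθ,
      ← exists_eigenvector_crossMatrixConj_iff hσ hdet hθ (by rw [hqθ]; exact_mod_cast hq.ne'),
      ← hM]
    refine exists_congr fun v => and_congr_left' ?_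
    rw [← exists_eq_mulVec_and_mul_self_mulVec_dotProduct_eq_zero_iff hσ hdet θ v, hσσ]
    rfl
  exact ⟨(hspec _).2 (Or.inl rfl), (hspec _).2 (Or.inr rfl),
    fun γ v hv hv0 hMv => (hspec γ).1 ⟨v, hv, hv0, hMv⟩⟩

/-- the matrix `μ₀^{-1/2} r(θ₀) μ₀^{-1/2}`, restricted to the
2-dimensional subspace `J⁰_{θ₀} = {μ₀^{1/2} c : ⟨μ₀ c, θ₀⟩ = 0}` of `ℂ³`, has
eigenvalues `± i ⟨μ₀θ₀,θ₀⟩^{1/2} / (det μ₀)^{1/2}`.  Here `s = μ₀^{1/2}`. -/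
theorem eigenvalues_on_solenoidal_subspace
    (μ₀ s : Matrix (Fin 3) (Fin 3) ℝ)
    (hμ₀ : μ₀.PosDef) (hμ₀symm : μ₀.IsSymm)
    (hs : s.PosDef) (hssymm : s.IsSymm) (hsq : s * s = μ₀)
    (θ₀ : Fin 3 → ℝ) (hθ₀ : ∑ i, θ₀ i ^ 2 = 1) :
    let M : Matrix (Fin 3) (Fin 3) ℂ :=
      (s⁻¹ * crossMatrix θ₀ * s⁻¹).map Complex.ofReal;
    let J : Set (Fin 3 → ℂ) :=
      {v | ∃ c : Fin 3 → ℂ, v = (s.map Complex.ofReal) *ᵥ c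
        ∧ ((μ₀.map Complex.ofReal) *ᵥ c) ⬝ᵥ (fun i => (θ₀ i : ℂ)) = 0};
    let c₀ : ℝ := Real.sqrt ((μ₀ *ᵥ θ₀) ⬝ᵥ θ₀) / Real.sqrt μ₀.det;
    (∃ v ∈ J, v ≠ 0 ∧ M *ᵥ v = (Complex.I * c₀) • v)
      ∧ (∃ v ∈ J, v ≠ 0 ∧ M *ᵥ v = (-Complex.I * c₀) • v)
      ∧ ∀ (γ : ℂ) (v : Fin 3 → ℂ), v ∈ J → v ≠ 0 → M *ᵥ v = γ • v →
          γ = Complex.I * c₀ ∨ γ = -Complex.I * c₀ :=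
  eigenvalues_on_solenoidal_subspace_general μ₀ s hμ₀ hssymm hsq θ₀ hθ₀
end

section
/- Consequently, if N₀(θ₀) ≠ 0 (i.e., f(θ₀) ≠ 0 at a point where γ₁(θ₀) = γ₂(θ₀)), the operator N(θ₀) = -i f(θ₀) μ₀^{-1/2}r(θ₀)μ₀^{-1/2} restricted to J⁰_{θ₀} has the two real eigenvalues μ_{1,2}(θ₀) = ± f(θ₀) ⟨μ₀θ₀, θ₀⟩^{1/2} / (det μ₀)^{1/2}. -/
open Matrix

/-!
Since `sᵀ r(s θ) s = det s • r(θ)` and `s` is symmetric, `N(θ₀) = c • r(a)` with `a = s θ₀` and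
`c = -i f / det s`, and `J⁰_{θ₀}` is the (complex bilinear) orthogonal complement of `a`.
On `a^⊥` the triple product expansion gives `a × (a × v) = -(a ⬝ a) v`, so an eigenvalue `γ` of
`N` there satisfies `γ² = -c² |a|² = μ₁²`. Conversely, for a real `p ⊥ a` and `l = ± i |a|`,
the vector `l p + a × p` is a nonzero eigenvector of `a × ·` in `a^⊥` with eigenvalue `l`.
Finally `|a|² = ⟨μ₀ θ₀, θ₀⟩` and `det s = √(det μ₀)`.
-/

lemma transpose_mul_crossMatrix_mulVec_mul (M : Matrix (Fin 3) (Fin 3) ℝ) (θ : Fin 3 → ℝ) :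
    Mᵀ * crossMatrix (M *ᵥ θ) * M = M.det • crossMatrix θ := by
  ext i j
  fin_cases i <;> fin_cases j <;>
    simp [crossMatrix, mul_apply, mulVec, dotProduct, Fin.sum_univ_three, det_fin_three] <;> ring

lemma crossMatrix_map_mulVec {R : Type*} [CommRing R] (φ : ℝ →+* R) (θ : Fin 3 → ℝ)
    (v : Fin 3 → R) : (crossMatrix θ).map φ *ᵥ v = (φ ∘ θ) ⨯₃ v := by
  ext i
  fin_cases i <;> simp [crossMatrix, mulVec, dotProduct, Fin.sum_univ_three, cross_apply] <;> ring

namespace Matrix.IsSymm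

lemma inv_mul_crossMatrix_mul_inv {s : Matrix (Fin 3) (Fin 3) ℝ} (hs : s.IsSymm)
    (hdet : s.det ≠ 0) (θ : Fin 3 → ℝ) :
    s⁻¹ * crossMatrix θ * s⁻¹ = s.det⁻¹ • crossMatrix (s *ᵥ θ) := by
  have hu : IsUnit s.det := hdet.isUnit
  calc s⁻¹ * crossMatrix θ * s⁻¹ = s.det⁻¹ • (s⁻¹ * (s.det • crossMatrix θ) * s⁻¹) := by
        rw [Matrix.mul_smul, Matrix.smul_mul, smul_smul, inv_mul_cancel₀ hdet, one_smul]
    _ = s.det⁻¹ • ((s⁻¹ * s) * crossMatrix (s *ᵥ θ) * (s * s⁻¹)) := by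
        rw [← transpose_mul_crossMatrix_mulVec_mul, hs.eq]; simp only [Matrix.mul_assoc]
    _ = s.det⁻¹ • crossMatrix (s *ᵥ θ) := by
        rw [nonsing_inv_mul s hu, mul_nonsing_inv s hu, Matrix.one_mul, Matrix.mul_one]

lemma map_inv_mul_crossMatrix_mul_inv_mulVec {s : Matrix (Fin 3) (Fin 3) ℝ} (hs : s.IsSymm)
    (hdet : s.det ≠ 0) (θ : Fin 3 → ℝ) (v : Fin 3 → ℂ) :
    (s⁻¹ * crossMatrix θ * s⁻¹).map Complex.ofReal *ᵥ v =
      (s.det : ℂ)⁻¹ • (Complex.ofReal ∘ (s *ᵥ θ)) ⨯₃ v := by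
  rw [hs.inv_mul_crossMatrix_mul_inv hdet, Matrix.map_smul' _ _ _ Complex.ofReal_mul,
    smul_mulVec, Complex.ofReal_inv]
  exact congrArg _ (crossMatrix_map_mulVec Complex.ofRealHom _ v)

variable {n R : Type*} [Fintype n] [CommRing R] {S : Matrix n n R}

lemma mul_self_mulVec_dotProduct (hS : S.IsSymm) (c w : n → R) :
    ((S * S) *ᵥ c) ⬝ᵥ w = (S *ᵥ c) ⬝ᵥ (S *ᵥ w) := by
  rw [dotProduct_mulVec, ← mulVec_transpose, hS.eq, mulVec_mulVec]

lemma exists_mulVec_eq_and_mul_self_dotProduct_eq_zero_iff [DecidableEq n] (hS : S.IsSymm)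
    (hS' : IsUnit S) (w v : n → R) :
    (∃ c, v = S *ᵥ c ∧ ((S * S) *ᵥ c) ⬝ᵥ w = 0) ↔ v ⬝ᵥ (S *ᵥ w) = 0 := by
  constructor
  · rintro ⟨c, rfl, hc⟩
    rwa [← hS.mul_self_mulVec_dotProduct]
  · intro hv
    obtain ⟨c, rfl⟩ := mulVec_surjective_iff_isUnit.2 hS' v
    exact ⟨c, rfl, by rwa [hS.mul_self_mulVec_dotProduct]⟩

lemma exists_map_mulVec_eq_iff [DecidableEq n] {T : Type*} [CommRing T] (φ : R →+* T)
    (hS : S.IsSymm) (hS' : IsUnit S) (w : n → R) (v : n → T) :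
    (∃ c, v = S.map φ *ᵥ c ∧ ((S * S).map φ *ᵥ c) ⬝ᵥ (φ ∘ w) = 0) ↔
      v ⬝ᵥ (φ ∘ (S *ᵥ w)) = 0 := by
  rw [Matrix.map_mul, show φ ∘ (S *ᵥ w) = S.map φ *ᵥ (φ ∘ w) from funext (φ.map_mulVec S w)]
  exact (hS.map φ).exists_mulVec_eq_and_mul_self_dotProduct_eq_zero_iff (hS'.map φ.mapMatrix) _ v

end Matrix.IsSymm

section CrossEigen

variable {K : Type*} [Field K] {a p : Fin 3 → K} {l : K}

lemma cross_smul_add_cross_eq_smul (hl : l ^ 2 = -(a ⬝ᵥ a)) (hap : a ⬝ᵥ p = 0) :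
    a ⨯₃ (l • p + a ⨯₃ p) = l • (l • p + a ⨯₃ p) := by
  rw [map_add, map_smul, cross_cross_eq_smul_sub_smul', hap, zero_smul, zero_sub, smul_add,
    smul_smul, ← sq, hl, neg_smul, add_comm]

lemma dotProduct_smul_add_cross_eq_zero (hap : a ⬝ᵥ p = 0) : a ⬝ᵥ (l • p + a ⨯₃ p) = 0 := by
  rw [dotProduct_add, dotProduct_smul, hap, dot_self_cross, smul_zero, add_zero]

lemma smul_add_cross_ne_zero (ha : a ≠ 0) (hp : p ⬝ᵥ p ≠ 0) (hap : a ⬝ᵥ p = 0) :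
    l • p + a ⨯₃ p ≠ 0 := by
  intro h
  -- crossing with `p` leaves `(p ⬝ p) • a = 0`
  have := congrArg (p ⨯₃ ·) h
  simp only [map_add, map_smul, cross_self, smul_zero, zero_add, cross_cross_eq_smul_sub_smul',
    map_zero, hap, zero_smul, sub_zero, smul_eq_zero] at this
  exact this.elim hp ha

lemma sq_eq_neg_sq_mul_dotProduct_of_smul_cross_eq_smul {v : Fin 3 → K} {c γ : K}
    (hav : a ⬝ᵥ v = 0) (hv : v ≠ 0) (h : c • a ⨯₃ v = γ • v) :
    γ ^ 2 = -(c ^ 2 * (a ⬝ᵥ a)) := by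
  apply smul_left_injective K hv
  calc γ ^ 2 • v = c • a ⨯₃ (c • a ⨯₃ v) := by
        rw [h, map_smul, smul_comm, h, smul_smul, sq]
    _ = -(c ^ 2 * (a ⬝ᵥ a)) • v := by
        rw [map_smul, cross_cross_eq_smul_sub_smul', hav, zero_smul, zero_sub,
          smul_smul, smul_neg, smul_smul, neg_smul, sq]

end CrossEigen

lemma ofReal_comp_dotProduct {n : Type*} [Fintype n] (u w : n → ℝ) :
    (Complex.ofReal ∘ u) ⬝ᵥ (Complex.ofReal ∘ w) = ((u ⬝ᵥ w : ℝ) : ℂ) :=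
  (Complex.ofRealHom.map_dotProduct u w).symm

lemma exists_ne_zero_ofReal_cross_eq_smul {a : Fin 3 → ℝ} (ha : a ≠ 0) {l : ℂ}
    (hl : l ^ 2 = -((a ⬝ᵥ a : ℝ) : ℂ)) :
    ∃ z : Fin 3 → ℂ, z ≠ 0 ∧ z ⬝ᵥ (Complex.ofReal ∘ a) = 0 ∧
      (Complex.ofReal ∘ a) ⨯₃ z = l • z := by
  -- `p` is taken real so that `p ⬝ p ≠ 0`, which fails for isotropic complex vectors
  obtain ⟨p, hp, hpa⟩ := exists_ne_zero_dotProduct_eq_zero a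
  have hap : (Complex.ofReal ∘ a) ⬝ᵥ (Complex.ofReal ∘ p) = 0 := by
    rw [ofReal_comp_dotProduct, dotProduct_comm, hpa, Complex.ofReal_zero]
  refine ⟨_, smul_add_cross_ne_zero ?_ ?_ hap,
    (dotProduct_comm _ _).trans (dotProduct_smul_add_cross_eq_zero hap),
    cross_smul_add_cross_eq_smul (by rwa [ofReal_comp_dotProduct]) hap⟩
  · simpa using Complex.ofReal_injective.comp_left.ne ha
  · rw [ofReal_comp_dotProduct]
    exact_mod_cast dotProduct_self_eq_zero.not.2 hp

theorem N_eigenvalues_on_solenoidal_subspace_general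
    (μ₀ s : Matrix (Fin 3) (Fin 3) ℝ)
    (hs : s.PosDef) (hssymm : s.IsSymm) (hsq : s * s = μ₀)
    (f : ℝ)
    (θ₀ : Fin 3 → ℝ) (hθ₀ : ∑ i, θ₀ i ^ 2 = 1) :
    let N : Matrix (Fin 3) (Fin 3) ℂ :=
      (-(f : ℂ) * Complex.I) • ((s⁻¹ * crossMatrix θ₀ * s⁻¹).map Complex.ofReal);
    let J : Set (Fin 3 → ℂ) :=
      {v | ∃ c : Fin 3 → ℂ, v = (s.map Complex.ofReal) *ᵥ c
        ∧ ((μ₀.map Complex.ofReal) *ᵥ c) ⬝ᵥ (fun i => (θ₀ i : ℂ)) = 0};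
    let μ₁ : ℝ := f * Real.sqrt ((μ₀ *ᵥ θ₀) ⬝ᵥ θ₀) / Real.sqrt μ₀.det;
    (∃ v ∈ J, v ≠ 0 ∧ N *ᵥ v = (μ₁ : ℂ) • v)
      ∧ (∃ v ∈ J, v ≠ 0 ∧ N *ᵥ v = (-μ₁ : ℂ) • v)
      ∧ ∀ (γ : ℂ) (v : Fin 3 → ℂ), v ∈ J → v ≠ 0 → N *ᵥ v = γ • v →
          γ = (μ₁ : ℂ) ∨ γ = (-μ₁ : ℂ) := by
  intro N J μ₁
  subst hsq
  have hdet : 0 < s.det := hs.det_pos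
  have hsu : IsUnit s := hs.isUnit
  set a := s *ᵥ θ₀
  set L := Real.sqrt (a ⬝ᵥ a)
  set c : ℂ := -(f : ℂ) * Complex.I * (s.det : ℂ)⁻¹
  have hN (v : Fin 3 → ℂ) : N *ᵥ v = c • (Complex.ofReal ∘ a) ⨯₃ v := by
    rw [smul_mulVec, hssymm.map_inv_mul_crossMatrix_mul_inv_mulVec hdet.ne', smul_smul]
  have hJ (v : Fin 3 → ℂ) : v ∈ J ↔ v ⬝ᵥ (Complex.ofReal ∘ a) = 0 :=
    hssymm.exists_map_mulVec_eq_iff Complex.ofRealHom hsu θ₀ v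
  have ha : a ≠ 0 := by
    have hθ : θ₀ ≠ 0 := by rintro rfl; simp at hθ₀
    simpa using (mulVec_injective_iff_isUnit.2 hsu).ne hθ
  have hL : ((a ⬝ᵥ a : ℝ) : ℂ) = (L : ℂ) ^ 2 := by
    rw [← Complex.ofReal_pow, Real.sq_sqrt]
    exact Fintype.sum_nonneg fun i => mul_self_nonneg (a i)
  have hcL : c * (Complex.I * L) = μ₁ := by
    simp only [μ₁, L, a, hssymm.mul_self_mulVec_dotProduct, det_mul, Real.sqrt_mul_self hdet.le]
    push_cast
    linear_combination -(f : ℂ) * (s.det : ℂ)⁻¹ * L * Complex.I_sq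
  have eigen (l : ℂ) (hl : l ^ 2 = -((a ⬝ᵥ a : ℝ) : ℂ)) :
      ∃ v ∈ J, v ≠ 0 ∧ N *ᵥ v = (c * l) • v := by
    obtain ⟨z, hz, hza, hcross⟩ := exists_ne_zero_ofReal_cross_eq_smul ha hl
    exact ⟨z, (hJ z).2 hza, hz, by rw [hN, hcross, smul_smul]⟩
  refine ⟨?_, ?_, fun γ v hv hv0 hNv => ?_⟩
  · simpa [hcL] using eigen (Complex.I * L) (by rw [hL, mul_pow, Complex.I_sq, neg_one_mul])
  · simpa [hcL] using
      eigen (-(Complex.I * L)) (by rw [hL, neg_sq, mul_pow, Complex.I_sq, neg_one_mul])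
  · have hγ := sq_eq_neg_sq_mul_dotProduct_of_smul_cross_eq_smul
      ((dotProduct_comm _ _).trans ((hJ v).1 hv)) hv0 ((hN v).symm.trans hNv)
    rw [ofReal_comp_dotProduct] at hγ
    refine sq_eq_sq_iff_eq_or_eq_neg.1 ?_
    rw [← hcL]
    linear_combination hγ - c ^ 2 * hL - c ^ 2 * (L : ℂ) ^ 2 * Complex.I_sq

/-- if `f(θ₀) ≠ 0` (the case `N₀(θ₀) ≠ 0`, occurring at a point where
`γ₁(θ₀) = γ₂(θ₀)`), then `N(θ₀) = -i f(θ₀) μ₀^{-1/2} r(θ₀) μ₀^{-1/2}` restricted to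
`J⁰_{θ₀} = {μ₀^{1/2} c : ⟨μ₀ c, θ₀⟩ = 0}` has the two real eigenvalues
`μ_{1,2}(θ₀) = ± f(θ₀) ⟨μ₀θ₀,θ₀⟩^{1/2} / (det μ₀)^{1/2}`.  Here `s = μ₀^{1/2}`. -/
theorem N_eigenvalues_on_solenoidal_subspace
    (μ₀ s : Matrix (Fin 3) (Fin 3) ℝ)
    (hμ₀ : μ₀.PosDef) (hμ₀symm : μ₀.IsSymm)
    (hs : s.PosDef) (hssymm : s.IsSymm) (hsq : s * s = μ₀)
    (f : ℝ) (hf : f ≠ 0)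
    (θ₀ : Fin 3 → ℝ) (hθ₀ : ∑ i, θ₀ i ^ 2 = 1) :
    let N : Matrix (Fin 3) (Fin 3) ℂ :=
      (-(f : ℂ) * Complex.I) • ((s⁻¹ * crossMatrix θ₀ * s⁻¹).map Complex.ofReal);
    let J : Set (Fin 3 → ℂ) :=
      {v | ∃ c : Fin 3 → ℂ, v = (s.map Complex.ofReal) *ᵥ c
        ∧ ((μ₀.map Complex.ofReal) *ᵥ c) ⬝ᵥ (fun i => (θ₀ i : ℂ)) = 0};
    let μ₁ : ℝ := f * Real.sqrt ((μ₀ *ᵥ θ₀) ⬝ᵥ θ₀) / Real.sqrt μ₀.det;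
    (∃ v ∈ J, v ≠ 0 ∧ N *ᵥ v = (μ₁ : ℂ) • v)
      ∧ (∃ v ∈ J, v ≠ 0 ∧ N *ᵥ v = (-μ₁ : ℂ) • v)
      ∧ ∀ (γ : ℂ) (v : Fin 3 → ℂ), v ∈ J → v ≠ 0 → N *ᵥ v = γ • v →
          γ = (μ₁ : ℂ) ∨ γ = (-μ₁ : ℂ) :=
  N_eigenvalues_on_solenoidal_subspace_general μ₀ s hs hssymm hsq f θ₀ hθ₀
end
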